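/- If two channel Holevo informations satisfy I_P + I_E ≤ 1, and each satisfies I ≥ log₂(2/(1+√F)) with F ∈ [0,1], then 2√F_P + √F_E ≥ 1. -/

import Mathlib

/-!
Since `logb 2 (2 / (1 + s)) = 1 - logb 2 (1 + s)`, the bound `I_P + I_E ≤ 1` forces
`(1 + √F_P) (1 + √F_E) ≥ 2`, i.e. `√F_P + √F_E + √F_P √F_E ≥ 1`. The cross term is at most
`√F_P` unless `√F_E ≥ 1`, and in either case `2 √F_P + √F_E ≥ 1`.
-/

open Real

lemma Real.logb_two_div {x : ℝ} (hx : 0 < x) : logb 2 (2 / x) = 1 - logb 2 x := by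
  rw [logb_div two_ne_zero hx.ne', logb_self_eq_one one_lt_two]

lemma Real.two_le_mul_of_logb_two_div_add_le_one {x y : ℝ} (hx : 0 < x) (hy : 0 < y)
    (h : logb 2 (2 / x) + logb 2 (2 / y) ≤ 1) : 2 ≤ x * y := by
  rw [logb_two_div hx, logb_two_div hy] at h
  have hlog : 1 ≤ logb 2 (x * y) := by
    rw [logb_mul hx.ne' hy.ne']
    linarith
  simpa using (le_logb_iff_rpow_le one_lt_two (mul_pos hx hy)).mp hlog

lemma one_le_two_mul_add_of_two_le_one_add_mul_one_add {a b : ℝ} (ha : 0 ≤ a)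
    (h : 2 ≤ (1 + a) * (1 + b)) : 1 ≤ 2 * a + b := by
  rcases le_total b 1 with hb1 | hb1
  · nlinarith [mul_le_mul_of_nonneg_left hb1 ha]
  · linarith

theorem stmt_1_general (IP IE FP FE : ℝ)
    (hsum : IP + IE ≤ 1)
    (hIP : IP ≥ Real.logb 2 (2 / (1 + Real.sqrt FP)))
    (hIE : IE ≥ Real.logb 2 (2 / (1 + Real.sqrt FE))) :
    2 * Real.sqrt FP + Real.sqrt FE ≥ 1 := by
  have hprod : 2 ≤ (1 + √FP) * (1 + √FE) :=
    two_le_mul_of_logb_two_div_add_le_one (by positivity) (by positivity) (by linarith)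
  exact one_le_two_mul_add_of_two_le_one_add_mul_one_add (sqrt_nonneg _) hprod

theorem stmt_1 (IP IE FP FE : ℝ)
    (hFP0 : 0 ≤ FP) (hFP1 : FP ≤ 1) (hFE0 : 0 ≤ FE) (hFE1 : FE ≤ 1)
    (hsum : IP + IE ≤ 1)
    (hIP : IP ≥ Real.logb 2 (2 / (1 + Real.sqrt FP)))
    (hIE : IE ≥ Real.logb 2 (2 / (1 + Real.sqrt FE))) :
    2 * Real.sqrt FP + Real.sqrt FE ≥ 1 :=
  stmt_1_general IP IE FP FE hsum hIP hIE
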